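/- arXiv:2508.08420 — 4 statements merged into one kernel-verified Lean document; each statement's English description precedes it below -/
import Mathlib

section
/- Let A ⊂ ℝ^d be finite and spanning, π_off a probability distribution on A, α ∈ [0,1), and let π* maximize π ↦ log det((1-α)V_π + α V_{π_off}) over probability distributions π supported on a subset A_l ⊆ A whose mixture Gram matrix is invertible. Writing π̃* = (1-α)π* + α π_off and V = V_{π̃*}, the first-order optimality conditions imply d = (1-α) · max_{a∈A_l} aᵀV⁻¹a + α ∑_{a∈A} π_off(a) aᵀV⁻¹a. -/
/-!
Moving the design from `π*` towards the vertex `δ_b`, `b ∈ A_l`, moves the information matrix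
along the segment from `V` to `W = (1 - α) b bᵀ + α V_{π_off}`, and `det (V + t (W - V))` has
derivative `det V · tr (V⁻¹ (W - V)) = det V · (1 - α) (bᵀ V⁻¹ b - ∑ π* (a) aᵀ V⁻¹ a)` at `t = 0`.
Optimality of `π*` forces this to be `≤ 0`, so the maximum of `aᵀ V⁻¹ a` over `A_l` equals its
`π*`-average. On the other hand `d = tr (V⁻¹ V)` is exactly the mixture of that `π*`-average and
the `π_off`-average with weights `1 - α` and `α`.
-/

open Matrix BigOperators Filter Topology

section GramMatrix

variable {n : Type*} [Fintype n]

lemma trace_mul_sum_smul_vecMulVec (M : Matrix n n ℝ) (s : Finset (n → ℝ)) (w : (n → ℝ) → ℝ) :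
    (M * ∑ a ∈ s, w a • vecMulVec a a).trace = ∑ a ∈ s, w a * (a ⬝ᵥ M *ᵥ a) := by
  simp only [Matrix.mul_sum, Matrix.mul_smul, trace_sum, trace_smul, mul_vecMulVec,
    trace_vecMulVec, smul_eq_mul]
  exact Finset.sum_congr rfl fun a _ => by rw [dotProduct_comm]

lemma posSemidef_sum_smul_vecMulVec (s : Finset (n → ℝ)) {w : (n → ℝ) → ℝ}
    (hw : ∀ a ∈ s, 0 ≤ w a) : (∑ a ∈ s, w a • vecMulVec a a).PosSemidef :=
  posSemidef_sum s fun a ha => (posSemidef_vecMulVec_self_star a).smul (hw a ha)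

end GramMatrix

section DetPerturbation

variable {n : Type*} [Fintype n] [DecidableEq n]

lemma eventually_one_lt_det_one_add_smul {N : Matrix n n ℝ} (hN : 0 < N.trace) :
    ∀ᶠ t in 𝓝[>] (0 : ℝ), 1 < (1 + t • N).det := by
  set p := (det (1 + (Polynomial.X : Polynomial ℝ) • N.map Polynomial.C)).divX.divX
  have hslope : Tendsto (fun t : ℝ => N.trace + p.eval t * t) (𝓝 0) (𝓝 N.trace) := by
    simpa using (tendsto_const_nhds.add ((p.continuous.mul continuous_id).tendsto 0) :
      Tendsto (fun t : ℝ => N.trace + p.eval t * t) (𝓝 0) (𝓝 (N.trace + p.eval 0 * 0)))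
  filter_upwards [nhdsWithin_le_nhds (hslope.eventually (eventually_gt_nhds hN)),
    self_mem_nhdsWithin] with t hpos (ht : 0 < t)
  -- `det (1 + t • N) = 1 + t * trace N + O(t²)`
  rw [det_one_add_smul]
  nlinarith [mul_pos hpos ht]

lemma eventually_det_lt_det_add_smul {V D : Matrix n n ℝ} (hV : 0 < V.det)
    (hD : 0 < (V⁻¹ * D).trace) : ∀ᶠ t in 𝓝[>] (0 : ℝ), V.det < (V + t • D).det := by
  have hunit : IsUnit V.det := hV.ne'.isUnit
  filter_upwards [eventually_one_lt_det_one_add_smul hD] with t ht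
  have hfactor : V + t • D = V * (1 + t • (V⁻¹ * D)) := by
    rw [Matrix.mul_add, Matrix.mul_one, Matrix.mul_smul, mul_nonsing_inv_cancel_left _ _ hunit]
  rw [hfactor, det_mul]
  exact lt_mul_of_one_lt_right hV ht

lemma Matrix.PosDef.exists_det_lt_det_segment {V W : Matrix n n ℝ} (hV : V.PosDef)
    (hW : W.PosSemidef) (hVW : 0 < (V⁻¹ * (W - V)).trace) :
    ∃ t ∈ Set.Ioo (0 : ℝ) 1, ((1 - t) • V + t • W).PosDef ∧ V.det < ((1 - t) • V + t • W).det := by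
  obtain ⟨t, hdet, ht⟩ := ((eventually_det_lt_det_add_smul hV.det_pos hVW).and
    (Ioo_mem_nhdsGT zero_lt_one)).exists
  refine ⟨t, ht, (hV.smul (sub_pos.2 ht.2)).add_posSemidef (hW.smul ht.1.le), ?_⟩
  convert hdet using 2
  rw [smul_sub, sub_smul, one_smul]
  abel

end DetPerturbation

lemma Finset.sum_mul_le_sup' {ι : Type*} {s : Finset ι} (hs : s.Nonempty) (f : ι → ℝ)
    {w : ι → ℝ} (hw0 : ∀ i ∈ s, 0 ≤ w i) (hw1 : ∑ i ∈ s, w i = 1) :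
    ∑ i ∈ s, w i * f i ≤ s.sup' hs f :=
  calc ∑ i ∈ s, w i * f i ≤ ∑ i ∈ s, w i * s.sup' hs f :=
        Finset.sum_le_sum fun i hi => mul_le_mul_of_nonneg_left (s.le_sup' f hi) (hw0 i hi)
    _ = s.sup' hs f := by rw [← Finset.sum_mul, hw1, one_mul]

section OptimalDesign

variable {n : Type*} [Fintype n] {A Al : Finset (n → ℝ)} {πoff : (n → ℝ) → ℝ}
  {α : ℝ}

lemma trace_mul_sum_mixture_smul_vecMulVec (hsub : Al ⊆ A) (M : Matrix n n ℝ)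
    {π : (n → ℝ) → ℝ} (hπ : ∀ a ∉ Al, π a = 0) :
    (M * ∑ a ∈ A, ((1 - α) * π a + α * πoff a) • vecMulVec a a).trace
      = (1 - α) * ∑ a ∈ Al, π a * (a ⬝ᵥ M *ᵥ a) + α * ∑ a ∈ A, πoff a * (a ⬝ᵥ M *ᵥ a) := by
  have hrestrict : ∑ a ∈ A, π a * (a ⬝ᵥ M *ᵥ a) = ∑ a ∈ Al, π a * (a ⬝ᵥ M *ᵥ a) :=
    (Finset.sum_subset hsub fun a _ ha => by rw [hπ a ha, zero_mul]).symm
  rw [trace_mul_sum_smul_vecMulVec, ← hrestrict, Finset.mul_sum, Finset.mul_sum,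
    ← Finset.sum_add_distrib]
  exact Finset.sum_congr rfl fun a _ => by ring

lemma dotProduct_inv_mulVec_le_of_logDet_le [DecidableEq n] (hsub : Al ⊆ A) (hα : 0 ≤ α)
    (hα1 : α < 1) (hπoff0 : ∀ a ∈ A, 0 ≤ πoff a) {πstar : (n → ℝ) → ℝ}
    (hπs0 : ∀ a ∈ Al, 0 ≤ πstar a) (hπs1 : ∑ a ∈ Al, πstar a = 1)
    (hπsupp : ∀ a ∉ Al, πstar a = 0) {V : Matrix n n ℝ}
    (hV : V = ∑ a ∈ A, ((1 - α) * πstar a + α * πoff a) • vecMulVec a a) (hVpd : V.PosDef)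
    (hopt : ∀ π : (n → ℝ) → ℝ, (∀ a ∈ Al, 0 ≤ π a) → (∑ a ∈ Al, π a = 1) →
      (∀ a ∉ Al, π a = 0) →
      (∑ a ∈ A, ((1 - α) * π a + α * πoff a) • vecMulVec a a).PosDef →
      Real.log (∑ a ∈ A, ((1 - α) * π a + α * πoff a) • vecMulVec a a).det ≤ Real.log V.det)
    {b : n → ℝ} (hb : b ∈ Al) :
    b ⬝ᵥ V⁻¹ *ᵥ b ≤ ∑ a ∈ Al, πstar a * (a ⬝ᵥ V⁻¹ *ᵥ a) := by
  by_contra! hlt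
  set δ : (n → ℝ) → ℝ := fun a => if a = b then 1 else 0
  have hδ0 : ∀ a, 0 ≤ δ a := fun a => by positivity
  have hδsupp : ∀ a ∉ Al, δ a = 0 := fun a ha => if_neg (ne_of_mem_of_not_mem hb ha).symm
  set W := ∑ a ∈ A, ((1 - α) * δ a + α * πoff a) • vecMulVec a a
  have hW : W.PosSemidef := posSemidef_sum_smul_vecMulVec A fun a ha =>
    add_nonneg (mul_nonneg (by linarith) (hδ0 a)) (mul_nonneg hα (hπoff0 a ha))
  -- the derivative of `log det` at `V` in the direction of the vertex `b`
  have hVW : 0 < (V⁻¹ * (W - V)).trace := by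
    have hVV := trace_mul_sum_mixture_smul_vecMulVec hsub V⁻¹ hπsupp (πoff := πoff) (α := α)
    rw [← hV] at hVV
    rw [Matrix.mul_sub, trace_sub, hVV, trace_mul_sum_mixture_smul_vecMulVec hsub _ hδsupp]
    simp only [δ, ite_mul, one_mul, zero_mul, Finset.sum_ite_eq', if_pos hb]
    nlinarith
  obtain ⟨t, ⟨ht0, ht1⟩, hpd, hdet⟩ := hVpd.exists_det_lt_det_segment hW hVW
  set πt : (n → ℝ) → ℝ := fun a => (1 - t) * πstar a + t * δ a
  have hπt : ∑ a ∈ A, ((1 - α) * πt a + α * πoff a) • vecMulVec a a = (1 - t) • V + t • W := by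
    rw [hV, Finset.smul_sum, Finset.smul_sum, ← Finset.sum_add_distrib]
    exact Finset.sum_congr rfl fun a _ => by
      rw [smul_smul, smul_smul, ← add_smul]
      congr 1
      ring
  have hπt0 : ∀ a ∈ Al, 0 ≤ πt a := fun a ha =>
    add_nonneg (mul_nonneg (by linarith) (hπs0 a ha)) (mul_nonneg ht0.le (hδ0 a))
  have hπt1 : ∑ a ∈ Al, πt a = 1 := by
    simp only [πt, δ, Finset.sum_add_distrib, ← Finset.mul_sum, hπs1, Finset.sum_ite_eq',
      if_pos hb]
    ring
  have hπtsupp : ∀ a ∉ Al, πt a = 0 := fun a ha => by simp [πt, hπsupp a ha, hδsupp a ha]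
  have hle := hopt πt hπt0 hπt1 hπtsupp (hπt ▸ hpd)
  rw [hπt] at hle
  exact hle.not_gt (Real.log_lt_log hVpd.det_pos hdet)

end OptimalDesign

theorem stmt1_general {d : ℕ} (A Al : Finset (Fin d → ℝ)) (hsub : Al ⊆ A) (hne : Al.Nonempty)
    (πoff πstar : (Fin d → ℝ) → ℝ) (α : ℝ) (hα : 0 ≤ α) (hα1 : α < 1)
    (hπoff0 : ∀ a ∈ A, 0 ≤ πoff a)
    (hπs0 : ∀ a ∈ Al, 0 ≤ πstar a) (hπs1 : ∑ a ∈ Al, πstar a = 1)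
    (hπsupp : ∀ a ∉ Al, πstar a = 0)
    (V : Matrix (Fin d) (Fin d) ℝ)
    (hV : V = ∑ a ∈ A, ((1 - α) * πstar a + α * πoff a) • vecMulVec a a)
    (hVpd : V.PosDef)
    (hopt : ∀ π : (Fin d → ℝ) → ℝ, (∀ a ∈ Al, 0 ≤ π a) → (∑ a ∈ Al, π a = 1) →
      (∀ a ∉ Al, π a = 0) →
      (∑ a ∈ A, ((1 - α) * π a + α * πoff a) • vecMulVec a a).PosDef →
      Real.log (∑ a ∈ A, ((1 - α) * π a + α * πoff a) • vecMulVec a a).det ≤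
        Real.log V.det) :
    (d : ℝ) = (1 - α) * Al.sup' hne (fun a => a ⬝ᵥ V⁻¹.mulVec a)
      + α * ∑ a ∈ A, πoff a * (a ⬝ᵥ V⁻¹.mulVec a) := by
  have hd : (d : ℝ) = (1 - α) * ∑ a ∈ Al, πstar a * (a ⬝ᵥ V⁻¹ *ᵥ a)
      + α * ∑ a ∈ A, πoff a * (a ⬝ᵥ V⁻¹ *ᵥ a) := by
    rw [← trace_mul_sum_mixture_smul_vecMulVec hsub _ hπsupp, ← hV,
      nonsing_inv_mul _ hVpd.det_pos.ne'.isUnit, trace_one, Fintype.card_fin]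
  have hmax : Al.sup' hne (fun a => a ⬝ᵥ V⁻¹ *ᵥ a) = ∑ a ∈ Al, πstar a * (a ⬝ᵥ V⁻¹ *ᵥ a) :=
    le_antisymm
      (Finset.sup'_le _ _ fun _ hb => dotProduct_inv_mulVec_le_of_logDet_le hsub hα hα1 hπoff0
        hπs0 hπs1 hπsupp hV hVpd hopt hb)
      (Finset.sum_mul_le_sup' hne _ hπs0 hπs1)
  rw [hd, hmax]

theorem stmt1 {d : ℕ} (A Al : Finset (Fin d → ℝ)) (hsub : Al ⊆ A) (hne : Al.Nonempty)
    (hspan : Submodule.span ℝ (A : Set (Fin d → ℝ)) = ⊤)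
    (πoff πstar : (Fin d → ℝ) → ℝ) (α : ℝ) (hα : 0 ≤ α) (hα1 : α < 1)
    (hπoff0 : ∀ a ∈ A, 0 ≤ πoff a) (hπoff1 : ∑ a ∈ A, πoff a = 1)
    (hπs0 : ∀ a ∈ Al, 0 ≤ πstar a) (hπs1 : ∑ a ∈ Al, πstar a = 1)
    (hπsupp : ∀ a ∉ Al, πstar a = 0)
    (V : Matrix (Fin d) (Fin d) ℝ)
    (hV : V = ∑ a ∈ A, ((1 - α) * πstar a + α * πoff a) • vecMulVec a a)
    (hVpd : V.PosDef)
    (hopt : ∀ π : (Fin d → ℝ) → ℝ, (∀ a ∈ Al, 0 ≤ π a) → (∑ a ∈ Al, π a = 1) →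
      (∀ a ∉ Al, π a = 0) →
      (∑ a ∈ A, ((1 - α) * π a + α * πoff a) • vecMulVec a a).PosDef →
      Real.log (∑ a ∈ A, ((1 - α) * π a + α * πoff a) • vecMulVec a a).det ≤
        Real.log V.det) :
    (d : ℝ) = (1 - α) * Al.sup' hne (fun a => a ⬝ᵥ V⁻¹.mulVec a)
      + α * ∑ a ∈ A, πoff a * (a ⬝ᵥ V⁻¹.mulVec a) :=
  stmt1_general A Al hsub hne πoff πstar α hα hα1 hπoff0 hπs0 hπs1 hπsupp V hV hVpd hopt
end

section
/- Define m(δ) := log(1+δ) − δ/(1+δ) for δ > −1. Then: (1) m is increasing on [0,∞) and decreasing on (−1,0]; (2) for all δ ≥ δ_0 > 0, m(δ) ≥ (1 − δ_0/((1+δ_0)log(1+δ_0))) · log(1+δ); (3) for |δ| ≤ 1/2, m(δ) ≥ (2/7)δ². -/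
/-!
Everything reduces to sign conditions on derivatives. The derivative of
`c log(1+δ) - δ/(1+δ)` is `(c(1+δ) - 1)/(1+δ)²`: with `c = 1` this gives the monotonicity
claims, and for `c = δ₀/((1+δ₀) log(1+δ₀))` the function vanishes at `δ₀` and is increasing
beyond it because `log(1+δ₀) ≤ δ₀`. For the quadratic bound, `m(δ) - δ²/2` decreases on
`(-1, 0]`; on `[0, 1/2]` the bound is so tight at `δ = 1/2` that we need the Padé estimate
`log(1+x) ≥ 3x(2+x)/(6+6x+x²)`, itself proved by differentiating.
-/

open Real Set

lemma monotoneOn_of_hasDerivAt_of_nonneg_on_interior {D : Set ℝ} (hD : Convex ℝ D)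
    {f f' : ℝ → ℝ}
    (hf : ∀ x ∈ D, HasDerivAt f (f' x) x) (hf' : ∀ x ∈ interior D, 0 ≤ f' x) :
    MonotoneOn f D :=
  monotoneOn_of_hasDerivWithinAt_nonneg hD
    (fun x hx => (hf x hx).continuousAt.continuousWithinAt)
    (fun x hx => (hf x (interior_subset hx)).hasDerivWithinAt) hf'

lemma antitoneOn_of_hasDerivAt_of_nonpos_on_interior {D : Set ℝ} (hD : Convex ℝ D)
    {f f' : ℝ → ℝ}
    (hf : ∀ x ∈ D, HasDerivAt f (f' x) x) (hf' : ∀ x ∈ interior D, f' x ≤ 0) :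
    AntitoneOn f D :=
  antitoneOn_of_hasDerivWithinAt_nonpos hD
    (fun x hx => (hf x hx).continuousAt.continuousWithinAt)
    (fun x hx => (hf x (interior_subset hx)).hasDerivWithinAt) hf'

section Derivatives

variable {x : ℝ}

lemma hasDerivAt_log_one_add (hx : -1 < x) :
    HasDerivAt (fun δ => log (1 + δ)) (1 + x)⁻¹ x := by
  simpa using ((hasDerivAt_id' x).const_add 1).log (by linarith)

lemma hasDerivAt_div_one_add (hx : -1 < x) :
    HasDerivAt (fun δ => δ / (1 + δ)) ((1 + x) ^ 2)⁻¹ x := by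
  have : 1 + x ≠ 0 := by linarith
  refine ((hasDerivAt_id' x).fun_div ((hasDerivAt_id' x).const_add 1) this).congr_deriv ?_
  field_simp
  ring

lemma hasDerivAt_mul_log_one_add_sub_div (c : ℝ) (hx : -1 < x) :
    HasDerivAt (fun δ => c * log (1 + δ) - δ / (1 + δ)) ((c * (1 + x) - 1) / (1 + x) ^ 2) x := by
  have : 1 + x ≠ 0 := by linarith
  refine (((hasDerivAt_log_one_add hx).const_mul c).sub (hasDerivAt_div_one_add hx)).congr_deriv ?_
  field_simp

lemma hasDerivAt_log_one_add_sub_div (hx : -1 < x) :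
    HasDerivAt (fun δ => log (1 + δ) - δ / (1 + δ)) (x / (1 + x) ^ 2) x := by
  simpa using hasDerivAt_mul_log_one_add_sub_div 1 hx

end Derivatives

lemma monotoneOn_log_one_add_sub_div :
    MonotoneOn (fun δ : ℝ => log (1 + δ) - δ / (1 + δ)) (Ici 0) := by
  refine monotoneOn_of_hasDerivAt_of_nonneg_on_interior (convex_Ici 0)
    (fun x hx => hasDerivAt_log_one_add_sub_div (by linarith [mem_Ici.1 hx])) fun x hx => ?_
  rw [interior_Ici, mem_Ioi] at hx
  positivity

lemma antitoneOn_log_one_add_sub_div :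
    AntitoneOn (fun δ : ℝ => log (1 + δ) - δ / (1 + δ)) (Ioc (-1) 0) := by
  refine antitoneOn_of_hasDerivAt_of_nonpos_on_interior (convex_Ioc (-1) 0)
    (fun x hx => hasDerivAt_log_one_add_sub_div hx.1) fun x hx => ?_
  rw [interior_Ioc] at hx
  exact div_nonpos_of_nonpos_of_nonneg hx.2.le (sq_nonneg _)

lemma monotoneOn_mul_log_one_add_sub_div {a c : ℝ} (ha : -1 < a) (hc : 1 ≤ c * (1 + a)) :
    MonotoneOn (fun δ => c * log (1 + δ) - δ / (1 + δ)) (Ici a) := by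
  have hc0 : 0 ≤ c := by nlinarith
  refine monotoneOn_of_hasDerivAt_of_nonneg_on_interior (convex_Ici a)
    (fun x hx => hasDerivAt_mul_log_one_add_sub_div c (by linarith [mem_Ici.1 hx]))
    fun x hx => ?_
  rw [interior_Ici, mem_Ioi] at hx
  exact div_nonneg (by nlinarith) (sq_nonneg _)

lemma div_one_add_le_mul_log_one_add {δ₀ δ : ℝ} (hδ₀ : 0 < δ₀) (h : δ₀ ≤ δ) :
    δ / (1 + δ) ≤ δ₀ / ((1 + δ₀) * log (1 + δ₀)) * log (1 + δ) := by
  set c := δ₀ / ((1 + δ₀) * log (1 + δ₀))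
  have hlog : 0 < log (1 + δ₀) := log_pos (by linarith)
  have hc_at : c * log (1 + δ₀) - δ₀ / (1 + δ₀) = 0 := by
    simp only [c]
    field_simp
    ring
  have hc : 1 ≤ c * (1 + δ₀) := by
    have : log (1 + δ₀) ≤ δ₀ := by linarith [log_le_sub_one_of_pos (by linarith : 0 < 1 + δ₀)]
    simp only [c]
    rw [div_mul_eq_mul_div, le_div_iff₀ (by positivity)]
    nlinarith
  have := monotoneOn_mul_log_one_add_sub_div (by linarith) hc self_mem_Ici (mem_Ici.2 h) h
  simp only at this
  linarith

lemma sq_div_two_le_log_one_add_sub_div {δ : ℝ} (h₁ : -1 < δ) (h₀ : δ ≤ 0) :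
    δ ^ 2 / 2 ≤ log (1 + δ) - δ / (1 + δ) := by
  have hanti : AntitoneOn (fun δ : ℝ => log (1 + δ) - δ / (1 + δ) - δ ^ 2 / 2) (Ioc (-1) 0) := by
    refine antitoneOn_of_hasDerivAt_of_nonpos_on_interior (convex_Ioc (-1) 0)
      (fun x hx => (hasDerivAt_log_one_add_sub_div hx.1).sub
        (by simpa using (hasDerivAt_pow 2 x).div_const 2)) fun x hx => ?_
    rw [interior_Ioc] at hx
    obtain ⟨hx₁, hx₀⟩ := hx
    have : x / (1 + x) ^ 2 - x = -(x ^ 2 * (2 + x)) / (1 + x) ^ 2 := by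
      field_simp [show 1 + x ≠ 0 by linarith]
      ring
    rw [this]
    exact div_nonpos_of_nonpos_of_nonneg
      (neg_nonpos.2 (mul_nonneg (sq_nonneg x) (by linarith))) (sq_nonneg _)
  have := hanti ⟨h₁, h₀⟩ ⟨by norm_num, le_rfl⟩ h₀
  norm_num at this
  linarith

lemma pade_le_log_one_add {x : ℝ} (hx : 0 ≤ x) :
    3 * x * (2 + x) / (6 + 6 * x + x ^ 2) ≤ log (1 + x) := by
  have hF : ∀ y ∈ Ici (0 : ℝ), HasDerivAt
      (fun δ => log (1 + δ) - 3 * δ * (2 + δ) / (6 + 6 * δ + δ ^ 2))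
      (y ^ 4 / ((1 + y) * (6 + 6 * y + y ^ 2) ^ 2)) y := by
    intro y hy
    have hy : 0 ≤ y := hy
    have hden : 6 + 6 * y + y ^ 2 ≠ 0 := by positivity
    have hnum := ((hasDerivAt_id' y).const_mul 3).fun_mul ((hasDerivAt_id' y).const_add 2)
    have hden' := ((hasDerivAt_id' y).const_mul 6).const_add 6 |>.fun_add (hasDerivAt_pow 2 y)
    refine ((hasDerivAt_log_one_add (by linarith)).sub (hnum.fun_div hden' hden)).congr_deriv ?_
    field_simp
    ring
  have hmono := monotoneOn_of_hasDerivAt_of_nonneg_on_interior (convex_Ici 0) hF fun y hy => by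
    rw [interior_Ici, mem_Ioi] at hy
    positivity
  have := hmono self_mem_Ici (mem_Ici.2 hx) hx
  norm_num at this
  linarith

lemma two_sevenths_sq_le_log_one_add_sub_div {δ : ℝ} (h₀ : 0 ≤ δ) (h₁ : δ ≤ 1 / 2) :
    2 / 7 * δ ^ 2 ≤ log (1 + δ) - δ / (1 + δ) := by
  suffices 2 / 7 * δ ^ 2 + δ / (1 + δ) ≤ 3 * δ * (2 + δ) / (6 + 6 * δ + δ ^ 2) by
    linarith [pade_le_log_one_add h₀]
  have hgap : 3 * δ * (2 + δ) / (6 + 6 * δ + δ ^ 2) - (2 / 7 * δ ^ 2 + δ / (1 + δ)) =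
      δ ^ 2 * (9 - 10 * δ - 14 * δ ^ 2 - 2 * δ ^ 3) / (7 * (1 + δ) * (6 + 6 * δ + δ ^ 2)) := by
    field_simp
    ring
  have hpoly : 0 ≤ 9 - 10 * δ - 14 * δ ^ 2 - 2 * δ ^ 3 := by nlinarith
  rw [← sub_nonneg, hgap]
  positivity

theorem stmt5 :
    (MonotoneOn (fun δ : ℝ => Real.log (1 + δ) - δ / (1 + δ)) (Set.Ici (0 : ℝ))) ∧
    (AntitoneOn (fun δ : ℝ => Real.log (1 + δ) - δ / (1 + δ)) (Set.Ioc (-1 : ℝ) 0)) ∧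
    (∀ δ δ₀ : ℝ, 0 < δ₀ → δ₀ ≤ δ →
      (1 - δ₀ / ((1 + δ₀) * Real.log (1 + δ₀))) * Real.log (1 + δ)
        ≤ Real.log (1 + δ) - δ / (1 + δ)) ∧
    (∀ δ : ℝ, |δ| ≤ 1 / 2 → (2 / 7) * δ ^ 2 ≤ Real.log (1 + δ) - δ / (1 + δ)) := by
  refine ⟨monotoneOn_log_one_add_sub_div, antitoneOn_log_one_add_sub_div,
    fun δ δ₀ hδ₀ h => ?_, fun δ hδ => ?_⟩
  · linear_combination div_one_add_le_mul_log_one_add hδ₀ h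
  · obtain ⟨hlo, hhi⟩ := abs_le.1 hδ
    rcases le_total δ 0 with hneg | hpos
    · linarith [sq_nonneg δ, sq_div_two_le_log_one_add_sub_div (by linarith) hneg]
    · exact two_sevenths_sq_le_log_one_add_sub_div hpos hhi
end

section
/- Per-iteration information gain of Frank–Wolfe with offline data: with M, a, α, V_off as above, let w := Tr(M⁻¹((1−α)aaᵀ + αV_off)) > d and β := (w−d)/((d−1)w). Then log det(M') − log det(M) ≥ (d−1)·log((d−1)w/(d(w−1))) + log(w/d), and setting δ := w/d − 1 > 0, this lower bound is at least log(1+δ) − δ/(1+δ). -/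
/-!
Write `N = (1 - α) a aᵀ + α V_off` and `M = Bᴴ B`. Then `M + β N = Bᴴ (1 + β S) B` with
`S = B⁻ᴴ N B⁻¹` positive semidefinite and `tr S = tr (M⁻¹ N) = w`, so expanding
`det (1 + β S) = ∏ (1 + β λₖ) ≥ 1 + β w` over the eigenvalues of `S` gives
`log det M' - log det M ≥ log (1 + β w) - d log (1 + β)`. For the chosen `β` one has
`1 + β = d (w - 1) / ((d - 1) w)` and `1 + β w = (w - 1) / (d - 1)`, which turns this into the
stated bound; the second inequality is `log x ≤ x - 1` at `x = 1 + β`.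
-/

open Matrix

theorem Finset.one_add_sum_le_prod_one_add {ι : Type*} (s : Finset ι) {f : ι → ℝ}
    (hf : ∀ i ∈ s, 0 ≤ f i) : 1 + ∑ i ∈ s, f i ≤ ∏ i ∈ s, (1 + f i) := by
  induction s using Finset.cons_induction with
  | empty => simp
  | cons a s _ ih =>
    rw [Finset.forall_mem_cons] at hf
    rw [Finset.sum_cons, Finset.prod_cons]
    nlinarith [ih hf.2, hf.1, Finset.sum_nonneg hf.2]

namespace Matrix

variable {n : Type*} [Fintype n] [DecidableEq n]

theorem PosSemidef.one_add_trace_le_det_one_add {A : Matrix n n ℝ} (hA : A.PosSemidef) :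
    1 + A.trace ≤ (1 + A).det := by
  set U := hA.1.eigenvectorUnitary
  have h1A : 1 + A = (U : Matrix n n ℝ) * diagonal (fun i ↦ 1 + hA.1.eigenvalues i) * star U := by
    conv_lhs => rw [hA.1.spectral_theorem]
    rw [← map_one (Unitary.conjStarAlgAut ℝ _ U), ← map_add, Unitary.conjStarAlgAut_apply,
      ← diagonal_one, diagonal_add]
    rfl
  rw [h1A, det_mul_right_comm, Unitary.coe_mul_star_self, one_mul, det_diagonal,
    hA.1.trace_eq_sum_eigenvalues]
  exact Finset.univ.one_add_sum_le_prod_one_add fun i _ ↦ hA.eigenvalues_nonneg i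

open scoped MatrixOrder in
theorem PosDef.det_mul_one_add_trace_inv_mul_le_det_add {M N : Matrix n n ℝ} (hM : M.PosDef)
    (hN : N.PosSemidef) : M.det * (1 + (M⁻¹ * N).trace) ≤ (M + N).det := by
  obtain ⟨B, rfl⟩ := CStarAlgebra.nonneg_iff_eq_star_mul_self.mp hM.posSemidef.nonneg
  rw [star_eq_conjTranspose] at hM ⊢
  have hB : IsUnit B.det := by
    have := hM.det_pos.ne'
    rw [det_mul] at this
    exact isUnit_iff_ne_zero.mpr (right_ne_zero_of_mul this)
  set C := B⁻¹
  have hCB : C * B = 1 := nonsing_inv_mul B hB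
  have hBC : Bᴴ * Cᴴ = 1 := by rw [← conjTranspose_mul, hCB, conjTranspose_one]
  have hS : (Cᴴ * N * C).PosSemidef := hN.conjTranspose_mul_mul_same C
  have hsum : Bᴴ * B + N = Bᴴ * (1 + Cᴴ * N * C) * B := by
    rw [mul_add, add_mul, mul_one, ← mul_assoc, ← mul_assoc, hBC, one_mul, mul_assoc,
      hCB, mul_one]
  have htrace : (Cᴴ * N * C).trace = ((Bᴴ * B)⁻¹ * N).trace := by
    rw [mul_inv_rev, ← conjTranspose_nonsing_inv, trace_mul_cycle, mul_assoc]
  calc (Bᴴ * B).det * (1 + ((Bᴴ * B)⁻¹ * N).trace)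
      = (Bᴴ * B).det * (1 + (Cᴴ * N * C).trace) := by rw [htrace]
    _ ≤ (Bᴴ * B).det * (1 + Cᴴ * N * C).det :=
        mul_le_mul_of_nonneg_left hS.one_add_trace_le_det_one_add hM.det_pos.le
    _ = (Bᴴ * B + N).det := by rw [hsum, det_mul, det_mul, det_mul]; ring

open scoped MatrixOrder in
theorem PosSemidef.trace_mul_nonneg {A B : Matrix n n ℝ} (hA : A.PosSemidef) (hB : B.PosSemidef) :
    0 ≤ (A * B).trace := by
  obtain ⟨D, rfl⟩ := CStarAlgebra.nonneg_iff_eq_star_mul_self.mp hA.nonneg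
  rw [star_eq_conjTranspose, mul_assoc, trace_mul_comm]
  simpa only [mul_assoc] using (hB.mul_mul_conjTranspose_same D).trace_nonneg

theorem PosDef.log_one_add_mul_trace_sub_le_log_det_sub_log_det {M N : Matrix n n ℝ}
    (hM : M.PosDef) (hN : N.PosSemidef) {β : ℝ} (hβ : 0 ≤ β) :
    Real.log (1 + β * (M⁻¹ * N).trace) - Fintype.card n * Real.log (1 + β)
      ≤ Real.log ((1 + β)⁻¹ • (M + β • N)).det - Real.log M.det := by
  have ht : 0 ≤ (M⁻¹ * N).trace := hM.inv.posSemidef.trace_mul_nonneg hN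
  have hdet : M.det * (1 + β * (M⁻¹ * N).trace) ≤ (M + β • N).det := by
    simpa only [Matrix.mul_smul, trace_smul, smul_eq_mul] using
      hM.det_mul_one_add_trace_inv_mul_le_det_add (hN.smul hβ)
  have hpos : 0 < M.det * (1 + β * (M⁻¹ * N).trace) := by
    have := hM.det_pos
    positivity
  have hlog := Real.log_le_log hpos hdet
  rw [Real.log_mul hM.det_pos.ne' (by positivity)] at hlog
  rw [det_smul, Real.log_mul (by positivity) (hpos.trans_le hdet).ne', Real.log_pow,
    Real.log_inv]
  linarith

end Matrix

theorem log_one_add_mul_sub_mul_log_one_add_eq {d w β : ℝ} (hd : 1 < d) (hw : d < w)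
    (hβ : β = (w - d) / ((d - 1) * w)) :
    Real.log (1 + β * w) - d * Real.log (1 + β)
      = (d - 1) * Real.log ((d - 1) * w / (d * (w - 1))) + Real.log (w / d) := by
  have hd1 : 0 < d - 1 := by linarith
  have hw1 : 0 < w - 1 := by linarith
  have hw0 : 0 < w := by linarith
  have h1β : 1 + β = d * (w - 1) / ((d - 1) * w) := by
    rw [hβ]; field_simp; ring
  have h1βw : 1 + β * w = (w - 1) / (d - 1) := by
    rw [hβ]; field_simp; ring
  have hwd : w / d = (1 + β * w) / (1 + β) := by
    rw [h1β, h1βw]; field_simp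
  have hq : (d - 1) * w / (d * (w - 1)) = (1 + β)⁻¹ := by rw [h1β, inv_div]
  rw [hq, Real.log_inv, hwd, Real.log_div (by rw [h1βw]; positivity) (by rw [h1β]; positivity)]
  ring

theorem log_one_add_sub_div_one_add_le {d w : ℝ} (hd : 1 < d) (hw : d < w) :
    Real.log (1 + (w / d - 1)) - (w / d - 1) / (1 + (w / d - 1))
      ≤ (d - 1) * Real.log ((d - 1) * w / (d * (w - 1))) + Real.log (w / d) := by
  have hd1 : 0 < d - 1 := by linarith
  have hw1 : 0 < w - 1 := by linarith
  have hw0 : 0 < w := by linarith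
  have hd0 : 0 < d := by linarith
  have hδ : (w / d - 1) / (1 + (w / d - 1)) = (w - d) / w := by
    rw [add_sub_cancel]; field_simp
  have hlog : Real.log (d * (w - 1) / ((d - 1) * w)) ≤ d * (w - 1) / ((d - 1) * w) - 1 :=
    Real.log_le_sub_one_of_pos (by positivity)
  have hmul : (d - 1) * (d * (w - 1) / ((d - 1) * w) - 1) = (w - d) / w := by
    field_simp; ring
  rw [← inv_div (d * (w - 1)), Real.log_inv, hδ, add_sub_cancel]
  linarith [mul_le_mul_of_nonneg_left hlog hd1.le]

theorem stmt12_general {d : ℕ} (hd : 2 ≤ d) (α : ℝ) (hα0 : 0 ≤ α) (hα1 : α < 1)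
    (Voff : Matrix (Fin d) (Fin d) ℝ) (hVoff : Voff.PosSemidef)
    (a : Fin d → ℝ)
    (M : Matrix (Fin d) (Fin d) ℝ) (hMpd : M.PosDef)
    (w β : ℝ)
    (hw : w = (M⁻¹ * ((1 - α) • vecMulVec a a + α • Voff)).trace)
    (hwd : (d : ℝ) < w)
    (hβ : β = (w - d) / (((d : ℝ) - 1) * w))
    (M' : Matrix (Fin d) (Fin d) ℝ)
    (hM' : M' = (1 + β)⁻¹ • (M + β • ((1 - α) • vecMulVec a a + α • Voff))) :
    ((d : ℝ) - 1) * Real.log (((d : ℝ) - 1) * w / ((d : ℝ) * (w - 1)))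
        + Real.log (w / (d : ℝ))
      ≤ Real.log M'.det - Real.log M.det ∧
    Real.log (1 + (w / (d : ℝ) - 1)) - (w / (d : ℝ) - 1) / (1 + (w / (d : ℝ) - 1))
      ≤ ((d : ℝ) - 1) * Real.log (((d : ℝ) - 1) * w / ((d : ℝ) * (w - 1)))
        + Real.log (w / (d : ℝ)) := by
  have hd1 : (1 : ℝ) < d := by exact_mod_cast hd
  have hN : ((1 - α) • vecMulVec a a + α • Voff).PosSemidef := by
    have haa := posSemidef_vecMulVec_self_star a
    rw [star_trivial] at haa
    exact (haa.smul (sub_nonneg.2 hα1.le)).add (hVoff.smul hα0)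
  have hβ0 : 0 ≤ β := by
    rw [hβ]
    exact div_nonneg (by linarith) (by nlinarith)
  have hgain := hMpd.log_one_add_mul_trace_sub_le_log_det_sub_log_det hN hβ0
  rw [← hw, ← hM', Fintype.card_fin,
    log_one_add_mul_sub_mul_log_one_add_eq hd1 hwd hβ] at hgain
  exact ⟨hgain, log_one_add_sub_div_one_add_le hd1 hwd⟩

theorem stmt12 {d : ℕ} (hd : 2 ≤ d) (α : ℝ) (hα0 : 0 ≤ α) (hα1 : α < 1)
    (Vπ Voff : Matrix (Fin d) (Fin d) ℝ) (hVπ : Vπ.PosSemidef) (hVoff : Voff.PosSemidef)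
    (a : Fin d → ℝ)
    (M : Matrix (Fin d) (Fin d) ℝ) (hM : M = (1 - α) • Vπ + α • Voff) (hMpd : M.PosDef)
    (w β : ℝ)
    (hw : w = (M⁻¹ * ((1 - α) • vecMulVec a a + α • Voff)).trace)
    (hwd : (d : ℝ) < w)
    (hβ : β = (w - d) / (((d : ℝ) - 1) * w))
    (M' : Matrix (Fin d) (Fin d) ℝ)
    (hM' : M' = (1 + β)⁻¹ • (M + β • ((1 - α) • vecMulVec a a + α • Voff))) :
    ((d : ℝ) - 1) * Real.log (((d : ℝ) - 1) * w / ((d : ℝ) * (w - 1)))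
        + Real.log (w / (d : ℝ))
      ≤ Real.log M'.det - Real.log M.det ∧
    Real.log (1 + (w / (d : ℝ) - 1)) - (w / (d : ℝ) - 1) / (1 + (w / (d : ℝ) - 1))
      ≤ ((d : ℝ) - 1) * Real.log (((d : ℝ) - 1) * w / ((d : ℝ) * (w - 1)))
        + Real.log (w / (d : ℝ)) :=
  stmt12_general hd α hα0 hα1 Voff hVoff a M hMpd w β hw hwd hβ M' hM'
end

section
/- Simplex budget relaxation bound: for v ∈ [0,1]^d with ∑_i v_i ≤ 1, T, T_off > 0, and k ∈ {1,...,d} such that v_i = 0 for i < k and v_i > 0 for i ≥ k, the quantity D := sup over w in the d-simplex with w_i ≥ v_i of ∑_{i=1}^d (1 + (T_off/T)·v_i/w_i)^{−1/2} satisfies D ≥ (k−1) + (d−k+1)/√(1 + (T_off/T)∑_i v_i). -/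
open BigOperators

theorem stmt19 {d : ℕ} (T Toff : ℝ) (hT : 0 < T) (hToff : 0 < Toff)
    (v : Fin d → ℝ) (hv0 : ∀ i, 0 ≤ v i) (hv1 : ∀ i, v i ≤ 1) (hvsum : ∑ i, v i ≤ 1)
    (k : ℕ) (hk1 : 1 ≤ k) (hkd : k ≤ d)
    (hzero : ∀ i : Fin d, (i : ℕ) + 1 < k → v i = 0)
    (hpos : ∀ i : Fin d, k ≤ (i : ℕ) + 1 → 0 < v i)
    (D : ℝ)
    (hD : D = sSup {x : ℝ | ∃ w : Fin d → ℝ,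
      (∀ i, v i ≤ w i) ∧ (∀ i, 0 ≤ w i) ∧ (∑ i, w i = 1) ∧
      x = ∑ i, 1 / Real.sqrt (1 + (Toff / T) * v i / w i)}) :
    ((k : ℝ) - 1) + ((d : ℝ) - k + 1) / Real.sqrt (1 + (Toff / T) * ∑ i, v i) ≤ D := by
  have hd : 1 ≤ d := le_trans hk1 hkd
  set S := ∑ i, v i with hS
  have hTT : 0 ≤ Toff / T := le_of_lt (div_pos hToff hT)
  have hSpos : 0 < S := by
    refine Finset.sum_pos' (fun i _ => hv0 i) ⟨⟨d - 1, by omega⟩, Finset.mem_univ _, ?_⟩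
    exact hpos _ (by simp; omega)
  set c := 1 / Real.sqrt (1 + (Toff / T) * S) with hc
  set w : Fin d → ℝ := fun i => v i / S with hw
  -- boundedness of the set by d
  have hbdd : BddAbove {x : ℝ | ∃ w : Fin d → ℝ,
      (∀ i, v i ≤ w i) ∧ (∀ i, 0 ≤ w i) ∧ (∑ i, w i = 1) ∧
      x = ∑ i, 1 / Real.sqrt (1 + (Toff / T) * v i / w i)} := by
    refine ⟨d, ?_⟩
    rintro x ⟨u, hu1, hu2, hu3, rfl⟩
    calc (∑ i, 1 / Real.sqrt (1 + (Toff / T) * v i / u i))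
        ≤ ∑ _i : Fin d, (1 : ℝ) := by
          refine Finset.sum_le_sum fun i _ => ?_
          have ht : (0:ℝ) ≤ (Toff / T) * v i / u i :=
            div_nonneg (mul_nonneg hTT (hv0 i)) (hu2 i)
          have h1 : (1:ℝ) ≤ Real.sqrt (1 + (Toff / T) * v i / u i) := by
            have := Real.sqrt_le_sqrt (show (1:ℝ) ≤ 1 + (Toff / T) * v i / u i by linarith)
            rwa [Real.sqrt_one] at this
          rw [div_le_one (by linarith)]
          exact h1
      _ = (d : ℝ) := by simp
  -- membership of the witness value
  have hfeas1 : ∀ i, v i ≤ w i := by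
    intro i
    simp only [hw]
    rw [le_div_iff₀ hSpos]
    nlinarith [hv0 i]
  have hfeas2 : ∀ i, 0 ≤ w i := fun i => div_nonneg (hv0 i) hSpos.le
  have hfeas3 : ∑ i, w i = 1 := by
    simp only [hw]
    rw [← Finset.sum_div, div_self hSpos.ne']
  have hmem : (∑ i, 1 / Real.sqrt (1 + (Toff / T) * v i / w i)) ∈ {x : ℝ | ∃ w : Fin d → ℝ,
      (∀ i, v i ≤ w i) ∧ (∀ i, 0 ≤ w i) ∧ (∑ i, w i = 1) ∧
      x = ∑ i, 1 / Real.sqrt (1 + (Toff / T) * v i / w i)} :=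
    ⟨w, hfeas1, hfeas2, hfeas3, rfl⟩
  have hle := le_csSup hbdd hmem
  rw [← hD] at hle
  refine le_trans (le_of_eq ?_) hle
  -- compute the witness sum
  have hterm : ∀ i : Fin d, 1 / Real.sqrt (1 + (Toff / T) * v i / w i)
      = if (i : ℕ) + 1 < k then (1:ℝ) else c := by
    intro i
    by_cases hik : (i : ℕ) + 1 < k
    · rw [if_pos hik, hzero i hik]
      simp
    · rw [if_neg hik]
      have hvi : 0 < v i := hpos i (by omega)
      have : (Toff / T) * v i / w i = (Toff / T) * S := by
        simp only [hw]
        field_simp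
      rw [this, hc]
  rw [Finset.sum_congr rfl (fun i _ => hterm i), Fin.sum_univ_eq_sum_range
    (fun j => if j + 1 < k then (1:ℝ) else c)]
  rw [Finset.range_eq_Ico, ← Finset.sum_Ico_consecutive _ (Nat.zero_le (k-1)) (by omega : k - 1 ≤ d)]
  have h1 : ∑ j ∈ Finset.Ico 0 (k-1), (if j + 1 < k then (1:ℝ) else c) = (k:ℝ) - 1 := by
    rw [Finset.sum_congr rfl (fun j hj => if_pos (by simp [Finset.mem_Ico] at hj; omega))]
    simp; push_cast [hk1]; ring
  have h2 : ∑ j ∈ Finset.Ico (k-1) d, (if j + 1 < k then (1:ℝ) else c) = ((d:ℝ) - k + 1) * c := by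
    rw [Finset.sum_congr rfl (fun j hj => if_neg (by simp [Finset.mem_Ico] at hj; omega))]
    rw [Finset.sum_const, Nat.card_Ico, nsmul_eq_mul]
    congr 1
    have : (((d - (k-1)) : ℕ) : ℝ) = (d:ℝ) - ((k:ℝ) - 1) := by
      push_cast [Nat.cast_sub (by omega : k - 1 ≤ d), Nat.cast_sub hk1]; ring
    rw [this]; ring
  rw [h1, h2, hc]
  ring
end
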